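/- arXiv:1307.6533 — 6 statements merged into one kernel-verified Lean document; each statement's English description precedes it below -/
import Mathlib

section
/- If H is a subgroup of a finite group G, then the commuting probability of H is at least the commuting probability of G. -/
/-!
Write `N(A, B)` for the number of commuting pairs in `A × B`. For a subgroup `H` of `G` and any
`x`, the product formula gives `|C_G(x)| |H| ≤ |C_H(x)| |G|`; summing over `x` in `A` yields
`N(A, G) |H| ≤ N(A, H) |G|`. Applying this with `A = G` and, after swapping the factors of
`N(G, H) = N(H, G)`, with `A = H` gives `N(G, G) |H|² ≤ N(H, H) |G|²`.
-/

open Subgroup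

section

variable {G : Type*} [Group G]

theorem Subgroup.card_mul_card_le_card_subgroupOf_mul_card (K H : Subgroup G) [K.FiniteIndex] :
    Nat.card K * Nat.card H ≤ Nat.card (K.subgroupOf H) * Nat.card G := by
  have hrel : K.relIndex H ≤ K.index := K.relIndex_top_right ▸
    K.relIndex_le_of_le_right le_top (K.relIndex_top_right ▸ FiniteIndex.index_ne_zero)
  calc Nat.card K * Nat.card H
      = Nat.card K * (Nat.card (K.subgroupOf H) * K.relIndex H) := by
        rw [relIndex, card_mul_index]
    _ ≤ Nat.card K * (Nat.card (K.subgroupOf H) * K.index) := by gcongr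
    _ = Nat.card (K.subgroupOf H) * Nat.card G := by rw [← K.card_mul_index]; ring

theorem Subgroup.card_commute_mul_card_le [Finite G] (H : Subgroup G) (x : G) :
    Nat.card {g : G // Commute x g} * Nat.card H ≤
      Nat.card {h : H // Commute x h} * Nat.card G := by
  have hG : Nat.card {g : G // Commute x g} = Nat.card (centralizer {x}) :=
    Nat.card_congr <| Equiv.subtypeEquivRight fun g => by
      rw [mem_centralizer_singleton_iff]; exact eq_comm
  have hH : Nat.card {h : H // Commute x h} = Nat.card ((centralizer {x}).subgroupOf H) :=
    Nat.card_congr <| Equiv.subtypeEquivRight fun h => by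
      rw [mem_subgroupOf, mem_centralizer_singleton_iff]; exact eq_comm
  rw [hG, hH]
  exact card_mul_card_le_card_subgroupOf_mul_card _ H

theorem Subgroup.card_commute_pairs_mul_card_le [Finite G] (H : Subgroup G) {A : Type*}
    [Finite A] (f : A → G) :
    Nat.card {p : A × G // Commute (f p.1) p.2} * Nat.card H ≤
      Nat.card {p : A × H // Commute (f p.1) p.2} * Nat.card G := by
  have := Fintype.ofFinite A
  rw [Nat.card_congr (Equiv.subtypeProdEquivSigmaSubtype fun a (g : G) => Commute (f a) g),
    Nat.card_congr (Equiv.subtypeProdEquivSigmaSubtype fun a (h : H) => Commute (f a) h),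
    Nat.card_sigma, Nat.card_sigma, Finset.sum_mul, Finset.sum_mul]
  exact Finset.sum_le_sum fun a _ => H.card_commute_mul_card_le (f a)

theorem Subgroup.card_commute_pairs_mul_card_sq_le [Finite G] (H : Subgroup G) :
    Nat.card {p : G × G // Commute p.1 p.2} * Nat.card H ^ 2 ≤
      Nat.card {p : H × H // Commute p.1 p.2} * Nat.card G ^ 2 := by
  have hswap : Nat.card {p : G × H // Commute p.1 p.2} =
      Nat.card {p : H × G // Commute (p.1 : G) p.2} :=
    Nat.card_congr <| (Equiv.prodComm G H).subtypeEquiv fun _ => Commute.symm_iff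
  have hcoe : Nat.card {p : H × H // Commute (p.1 : G) p.2} =
      Nat.card {p : H × H // Commute p.1 p.2} :=
    Nat.card_congr <| Equiv.subtypeEquivRight fun _ => Submonoid.commute_coe_coe
  calc Nat.card {p : G × G // Commute p.1 p.2} * Nat.card H ^ 2
      ≤ Nat.card {p : G × H // Commute p.1 p.2} * Nat.card G * Nat.card H := by
        rw [sq, ← mul_assoc]
        exact Nat.mul_le_mul_right _ (H.card_commute_pairs_mul_card_le id)
    _ = Nat.card {p : H × G // Commute (p.1 : G) p.2} * Nat.card H * Nat.card G := by
        rw [hswap]; ring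
    _ ≤ Nat.card {p : H × H // Commute p.1 p.2} * Nat.card G ^ 2 := by
        rw [sq, ← mul_assoc, ← hcoe]
        exact Nat.mul_le_mul_right _ (H.card_commute_pairs_mul_card_le Subtype.val)

end

theorem commProb_le_of_subgroup {G : Type*} [Group G] [Finite G] (H : Subgroup G) :
    commProb G ≤ commProb H := by
  have hG : (0 : ℚ) < Nat.card G ^ 2 := by exact_mod_cast pow_pos Nat.card_pos 2
  have hH : (0 : ℚ) < Nat.card H ^ 2 := by exact_mod_cast pow_pos Nat.card_pos 2
  rw [commProb_def, commProb_def, div_le_div_iff₀ hG hH]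
  exact_mod_cast H.card_commute_pairs_mul_card_sq_le
end

section
/- If N is a normal subgroup of a finite group G, then the commuting probability of the quotient G/N is at least the commuting probability of G. -/
open Subgroup

/-- Each fibre of the map from commuting pairs of `G` to commuting pairs of `G ⧸ N` lies in a
product of two cosets of `N`. -/
theorem card_commute_le_card_commute_quotient_mul {G : Type*} [Group G] [Finite G]
    (N : Subgroup G) [N.Normal] :
    Nat.card {p : G × G // Commute p.1 p.2} ≤
      Nat.card {q : (G ⧸ N) × (G ⧸ N) // Commute q.1 q.2} * Nat.card N ^ 2 := by
  let e : G ≃ (G ⧸ N) × N := groupEquivQuotientProdSubgroup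
  rw [sq, ← Nat.card_prod, ← Nat.card_prod]
  refine Nat.card_le_card_of_injective (fun p =>
    (⟨((p.1.1 : G ⧸ N), (p.1.2 : G ⧸ N)), p.2.map (QuotientGroup.mk' N)⟩,
      ((e p.1.1).2, (e p.1.2).2))) ?_
  rintro ⟨⟨x₁, x₂⟩, _⟩ ⟨⟨y₁, y₂⟩, _⟩ h
  simp only [Prod.mk.injEq, Subtype.ext_iff] at h
  obtain ⟨⟨hq₁, hq₂⟩, hn₁, hn₂⟩ := h
  -- `(e g).1` is the coset of `g` by definition, so `hq₁` and `hq₂` give the first components.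
  have h₁ : x₁ = y₁ := e.injective (Prod.ext hq₁ (Subtype.ext hn₁))
  have h₂ : x₂ = y₂ := e.injective (Prod.ext hq₂ (Subtype.ext hn₂))
  simp only [h₁, h₂]

theorem commProb_le_of_quotient {G : Type*} [Group G] [Finite G] (N : Subgroup G) [N.Normal] :
    commProb G ≤ commProb (G ⧸ N) := by
  have hN : (Nat.card N : ℚ) ≠ 0 := Nat.cast_ne_zero.mpr Nat.card_pos.ne'
  calc commProb G
      = Nat.card {p : G × G // Commute p.1 p.2} / (Nat.card (G ⧸ N) * Nat.card N : ℚ) ^ 2 := by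
        rw [commProb_def, N.card_eq_card_quotient_mul_card_subgroup, Nat.cast_mul]
    _ ≤ (Nat.card {q : (G ⧸ N) × (G ⧸ N) // Commute q.1 q.2} * Nat.card N ^ 2 : ℚ) /
          (Nat.card (G ⧸ N) * Nat.card N : ℚ) ^ 2 := by
        gcongr
        exact_mod_cast card_commute_le_card_commute_quotient_mul N
    _ = commProb (G ⧸ N) := by
        rw [commProb_def, mul_pow]
        exact mul_div_mul_right _ _ (pow_ne_zero 2 hN)
end

section
/- If G is a finite nonabelian group, then the commuting probability of G is strictly greater than 1/|[G,G]|. -/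
/-!
Since `commProb G = k(G) / |G|`, where `k` counts conjugacy classes, it suffices to compare `k(G)`
with `k(G ⧸ [G,G]) = |G : [G,G]|`. The projection induces a surjection on conjugacy classes, and it
is not injective as soon as `[G,G] ≠ 1`: a nontrivial commutator and `1` lie in distinct classes
with the same image.
-/

namespace Subgroup

variable {G : Type*} [Group G] [Finite G]

theorem card_conjClasses_quotient_lt {H : Subgroup G} [H.Normal] (hH : H ≠ ⊥) :
    Nat.card (ConjClasses (G ⧸ H)) < Nat.card (ConjClasses G) := by
  set f := ConjClasses.map (QuotientGroup.mk' H)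
  have hf : Function.Surjective f := ConjClasses.map_surjective Quotient.mk''_surjective
  obtain ⟨h, hh, hne⟩ := H.bot_or_exists_ne_one.resolve_left hH
  have hf_not_inj : ¬ Function.Injective f := fun hinj ↦ by
    have hconj : ConjClasses.mk h = ConjClasses.mk 1 :=
      hinj (congrArg ConjClasses.mk ((QuotientGroup.eq_one_iff h).mpr hh))
    exact hne (isConj_one_left.mp (ConjClasses.mk_eq_mk_iff_isConj.mp hconj))
  refine (Nat.card_le_card_of_surjective f hf).lt_of_ne fun hcard ↦ hf_not_inj ?_
  exact ((Nat.bijective_iff_surjective_and_card f).mpr ⟨hf, hcard.symm⟩).injective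

theorem commProb_quotient_lt {H : Subgroup G} [H.Normal] (hH : H ≠ ⊥) :
    commProb (G ⧸ H) < commProb G * Nat.card H := by
  rw [commProb_def', commProb_def', div_lt_iff₀, mul_assoc, ← Nat.cast_mul, ← Subgroup.index,
    H.card_mul_index, div_mul_cancel₀, Nat.cast_lt]
  · exact card_conjClasses_quotient_lt hH
  · exact Nat.cast_ne_zero.mpr Finite.card_pos.ne'
  · exact Nat.cast_pos.mpr Finite.card_pos

end Subgroup

theorem commutator_ne_bot_of_mul_ne_mul {G : Type*} [Group G] {a b : G} (hab : a * b ≠ b * a) :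
    commutator G ≠ ⊥ := fun hbot ↦
  hab <| commutatorElement_eq_one_iff_mul_comm.mp <| (Subgroup.eq_bot_iff_forall _).mp hbot _ <|
    Subgroup.commutator_mem_commutator (Subgroup.mem_top a) (Subgroup.mem_top b)

theorem commProb_gt_inv_card_commutator {G : Type*} [Group G] [Finite G]
    (h : ∃ a b : G, a * b ≠ b * a) :
    commProb G > 1 / (Nat.card (commutator G) : ℚ) := by
  obtain ⟨a, b, hab⟩ := h
  have habelian : commProb (Abelianization G) = 1 :=
    commProb_eq_one_iff.mpr (Abelianization.commGroup G).to_isCommutative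
  rw [gt_iff_lt, div_lt_iff₀ (Nat.cast_pos.mpr Finite.card_pos), ← habelian]
  exact (commutator G).commProb_quotient_lt (commutator_ne_bot_of_mul_ne_mul hab)
end

section
/- If G is a finite nonabelian p-group whose commutator subgroup has order at most p², then cp(G) > (2p² + p − 2)/p⁵. -/
/-!
Every conjugacy class of `g` lies in the coset `[G, G] g`, so the class equation gives
`|G| < k(G) |[G, G]|` as soon as `[G, G]` is nontrivial (the class of `1` is a singleton).
Hence `cp(G) = k(G) / |G| > 1 / |[G, G]| ≥ 1 / p²`, and `1 / p² ≥ (2p² + p - 2) / p⁵`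
because `p³ - 2p² - p + 2 = (p - 2)(p² - 1) ≥ 0`.
-/

open scoped commutatorElement

theorem ConjClasses.ncard_carrier_le_card_commutator {G : Type*} [Group G] [Finite G]
    (x : ConjClasses G) : x.carrier.ncard ≤ Nat.card (commutator G) := by
  obtain ⟨g, rfl⟩ := ConjClasses.mk_surjective x
  have hsub : (ConjClasses.mk g).carrier ⊆ (· * g) '' (commutator G : Set G) := by
    intro y hy
    obtain ⟨z, rfl⟩ := isConj_iff.mp <|
      ConjClasses.mk_eq_mk_iff_isConj.mp (ConjClasses.mem_carrier_iff_mk_eq.mp hy).symm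
    refine ⟨⁅z, g⁆, Subgroup.commutator_mem_commutator (Subgroup.mem_top _)
      (Subgroup.mem_top _), ?_⟩
    simp only [commutatorElement_def, inv_mul_cancel_right]
  calc (ConjClasses.mk g).carrier.ncard
      ≤ ((· * g) '' (commutator G : Set G)).ncard := Set.ncard_le_ncard hsub
    _ = Nat.card (commutator G) :=
      (Set.ncard_image_of_injective _ (mul_left_injective g)).trans (Nat.card_coe_set_eq _).symm

theorem card_lt_card_conjClasses_mul_card_commutator {G : Type*} [Group G] [Finite G]
    (h : 1 < Nat.card (commutator G)) :
    Nat.card G < Nat.card (ConjClasses G) * Nat.card (commutator G) := by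
  classical
  cases nonempty_fintype G
  have hone : (ConjClasses.mk (1 : G)).carrier.ncard = 1 := by
    rw [Set.ncard_eq_one]
    exact ⟨1, Set.ext fun y => by
      simp [ConjClasses.mem_carrier_iff_mk_eq, ConjClasses.mk_eq_mk_iff_isConj]⟩
  calc Nat.card G = ∑ x : ConjClasses G, x.carrier.ncard := by
        rw [← Group.sum_card_conj_classes_eq_card, finsum_eq_sum_of_fintype]
    _ < ∑ _x : ConjClasses G, Nat.card (commutator G) :=
        Finset.sum_lt_sum (fun x _ => x.ncard_carrier_le_card_commutator)
          ⟨ConjClasses.mk 1, Finset.mem_univ _, hone ▸ h⟩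
    _ = Nat.card (ConjClasses G) * Nat.card (commutator G) := by
        rw [Finset.sum_const, Finset.card_univ, smul_eq_mul,
          Nat.card_eq_fintype_card (α := ConjClasses G)]

theorem inv_card_commutator_lt_commProb {G : Type*} [Group G] [Finite G]
    (h : 1 < Nat.card (commutator G)) :
    ((Nat.card (commutator G) : ℚ))⁻¹ < commProb G := by
  have hG : (0 : ℚ) < Nat.card G := by exact_mod_cast Nat.card_pos
  have hc : (0 : ℚ) < Nat.card (commutator G) := by exact_mod_cast Nat.card_pos
  rw [commProb_def', inv_lt_iff_one_lt_mul₀ hc, div_mul_eq_mul_div, one_lt_div hG]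
  exact_mod_cast card_lt_card_conjClasses_mul_card_commutator h

theorem one_lt_card_commutator_of_not_commute {G : Type*} [Group G] [Finite G]
    (h : ∃ a b : G, a * b ≠ b * a) : 1 < Nat.card (commutator G) := by
  rw [Subgroup.one_lt_card_iff_ne_bot, Ne, commutator_eq_bot_iff]
  obtain ⟨a, b, hab⟩ := h
  exact fun hG => hab (hG.is_comm.comm a b)

theorem div_pow_five_le_inv_sq {K : Type*} [Field K] [LinearOrder K] [IsStrictOrderedRing K]
    {x : K} (hx : 2 ≤ x) : (2 * x ^ 2 + x - 2) / x ^ 5 ≤ (x ^ 2)⁻¹ := by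
  have hx0 : 0 < x := by linarith
  rw [div_le_iff₀ (by positivity), inv_mul_eq_div, le_div_iff₀ (by positivity)]
  nlinarith [mul_nonneg (mul_nonneg (sq_nonneg x) (sub_nonneg.mpr hx))
    (mul_nonneg (by linarith : (0 : K) ≤ x - 1) (by linarith : (0 : K) ≤ x + 1))]

theorem commProb_gt_of_small_commutator_general {p : ℕ} (hp : p.Prime) {G : Type*} [Group G] [Finite G]
    (hna : ∃ a b : G, a * b ≠ b * a)
    (hcomm : Nat.card (commutator G) ≤ p ^ 2) :
    commProb G > (2 * p ^ 2 + p - 2 : ℚ) / (p : ℚ) ^ 5 := by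
  have hc := one_lt_card_commutator_of_not_commute hna
  calc (2 * p ^ 2 + p - 2 : ℚ) / (p : ℚ) ^ 5
      ≤ ((p : ℚ) ^ 2)⁻¹ := div_pow_five_le_inv_sq (by exact_mod_cast hp.two_le)
    _ ≤ ((Nat.card (commutator G) : ℚ))⁻¹ :=
      inv_anti₀ (by exact_mod_cast Nat.card_pos) (by exact_mod_cast hcomm)
    _ < commProb G := inv_card_commutator_lt_commProb hc

theorem commProb_gt_of_small_commutator {p : ℕ} (hp : p.Prime) {G : Type*} [Group G] [Finite G]
    (hG : IsPGroup p G) (hna : ∃ a b : G, a * b ≠ b * a)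
    (hcomm : Nat.card (commutator G) ≤ p ^ 2) :
    commProb G > (2 * p ^ 2 + p - 2 : ℚ) / (p : ℚ) ^ 5 :=
  commProb_gt_of_small_commutator_general hp hna hcomm
end

section
/- In a nilpotent group with upper central series 1 = Z₀(G) ≤ Z₁(G) ≤ Z₂(G) ≤ ..., for every i ≥ 1 the exponent of Z_{i+1}(G)/Z_i(G) divides the exponent of Z_i(G)/Z_{i-1}(G). -/
/-!
Let `n` be the exponent of `Z_i/Z_{i-1}`, so `zⁿ ∈ Z_{i-1}` for every `z ∈ Z_i`. For `x ∈ Z_{i+1}`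
and `g ∈ G` the commutator `⁅x, g⁆ ∈ Z_i` is central modulo `Z_{i-1}`, so modulo `Z_{i-1}` the map
`k ↦ ⁅xᵏ, g⁆` is a homomorphism and `⁅xⁿ, g⁆ ≡ ⁅x, g⁆ⁿ ≡ 1`. Hence `xⁿ ∈ Z_i`.
-/

open scoped commutatorElement

section

variable {G : Type*} [Group G]

theorem commutatorElement_pow_left_of_commute {a b : G} (h : Commute ⁅a, b⁆ a) :
    ∀ n : ℕ, ⁅a ^ n, b⁆ = ⁅a, b⁆ ^ n
  | 0 => by simp
  | n + 1 => by
    have hsucc : ⁅a ^ (n + 1), b⁆ = a * ⁅a ^ n, b⁆ * a⁻¹ * ⁅a, b⁆ := by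
      simp only [commutatorElement_def, pow_succ']
      group
    rw [hsucc, commutatorElement_pow_left_of_commute h n, ((h.pow_left n).symm).eq,
      mul_inv_cancel_right, ← pow_succ]

theorem mk'_commutatorElement_pow_left {N : Subgroup G} [N.Normal] {x g : G}
    (h : ∀ y, ⁅⁅x, g⁆, y⁆ ∈ N) (n : ℕ) :
    QuotientGroup.mk' N ⁅x ^ n, g⁆ = QuotientGroup.mk' N (⁅x, g⁆ ^ n) := by
  rw [map_commutatorElement, map_pow, map_pow, map_commutatorElement]
  apply commutatorElement_pow_left_of_commute
  rw [← commutatorElement_eq_one_iff_commute, ← map_commutatorElement, ← map_commutatorElement,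
    QuotientGroup.mk'_apply, QuotientGroup.eq_one_iff]
  exact h x

namespace Subgroup

theorem exponent_quotient_subgroupOf_dvd_iff {H K : Subgroup G} [K.Normal] {n : ℕ} :
    Monoid.exponent (H ⧸ K.subgroupOf H) ∣ n ↔ ∀ x ∈ H, x ^ n ∈ K := by
  simp [Monoid.exponent_dvd_iff_forall_pow_eq_one, QuotientGroup.forall_mk,
    ← QuotientGroup.mk_pow, QuotientGroup.eq_one_iff, mem_subgroupOf]

theorem pow_mem_upperCentralSeries_succ {j n : ℕ}
    (hn : ∀ z ∈ upperCentralSeries G (j + 1), z ^ n ∈ upperCentralSeries G j) {x : G}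
    (hx : x ∈ upperCentralSeries G (j + 2)) : x ^ n ∈ upperCentralSeries G (j + 1) := by
  refine mem_upperCentralSeries_succ_iff.mpr fun g ↦ ?_
  have hxg : ⁅x, g⁆ ∈ upperCentralSeries G (j + 1) := mem_upperCentralSeries_succ_iff.mp hx g
  rw [← QuotientGroup.eq_one_iff, ← QuotientGroup.mk'_apply,
    mk'_commutatorElement_pow_left (mem_upperCentralSeries_succ_iff.mp hxg),
    QuotientGroup.mk'_apply, QuotientGroup.eq_one_iff]
  exact hn _ hxg

end Subgroup

end

theorem exponent_upper_central_factors_dvd_general {G : Type*} [Group G] (i : ℕ) (hi : 1 ≤ i) :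
    Monoid.exponent
        ((Subgroup.upperCentralSeries G (i + 1)) ⧸
          ((Subgroup.upperCentralSeries G i).subgroupOf (Subgroup.upperCentralSeries G (i + 1)))) ∣
      Monoid.exponent
        ((Subgroup.upperCentralSeries G i) ⧸
          ((Subgroup.upperCentralSeries G (i - 1)).subgroupOf (Subgroup.upperCentralSeries G i))) := by
  obtain ⟨j, rfl⟩ := Nat.exists_eq_add_of_le' hi
  rw [Subgroup.exponent_quotient_subgroupOf_dvd_iff]
  exact fun x ↦ Subgroup.pow_mem_upperCentralSeries_succ
    (Subgroup.exponent_quotient_subgroupOf_dvd_iff.mp dvd_rfl)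

theorem exponent_upper_central_factors_dvd {G : Type*} [Group G] [Finite G]
    (hG : Group.IsNilpotent G) (i : ℕ) (hi : 1 ≤ i) :
    Monoid.exponent
        ((Subgroup.upperCentralSeries G (i + 1)) ⧸
          ((Subgroup.upperCentralSeries G i).subgroupOf (Subgroup.upperCentralSeries G (i + 1)))) ∣
      Monoid.exponent
        ((Subgroup.upperCentralSeries G i) ⧸
          ((Subgroup.upperCentralSeries G (i - 1)).subgroupOf (Subgroup.upperCentralSeries G i))) :=
  exponent_upper_central_factors_dvd_general i hi
end

section
/- Isoclinic finite groups have equal commuting probability: if G and H are isoclinic finite groups, then cp(G) = cp(H). -/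
/-!
Whether `a` and `b` commute depends only on their classes modulo the centre, through the
commutator map `κ_G : G/Z(G) × G/Z(G) → [G,G]`, `(aZ, bZ) ↦ [a,b]`. Each pair of cosets has
`|Z(G)|²` lifts, so `cp(G)` is the proportion of pairs in `(G/Z(G))²` on which `κ_G` is trivial.
An isoclinism `(α, β)` satisfies `β ∘ κ_G = κ_H ∘ (α × α)` with `β` injective, so `α × α` maps
the zero set of `κ_G` bijectively onto that of `κ_H`.
-/

open scoped commutatorElement

open Subgroup

section

variable {G : Type*} [Group G]

theorem commutatorElement_mul_left_of_mem_center {z : G} (hz : z ∈ center G) (a b : G) :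
    ⁅a * z, b⁆ = ⁅a, b⁆ := by
  have hzb : ⁅z, b⁆ = 1 := commutatorElement_eq_one_iff_mul_comm.mpr (mem_center_iff.mp hz b).symm
  rw [commutatorElement_mul_left_eq_conj_mul, hzb, mul_one, mul_inv_cancel, one_mul]

theorem commutatorElement_mul_right_of_mem_center {z : G} (hz : z ∈ center G) (a b : G) :
    ⁅a, b * z⁆ = ⁅a, b⁆ := by
  rw [← commutatorElement_inv, commutatorElement_mul_left_of_mem_center hz, commutatorElement_inv]

theorem commutatorElement_congr_of_inv_mul_mem_center {a₁ a₂ b₁ b₂ : G}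
    (ha : a₁⁻¹ * a₂ ∈ center G) (hb : b₁⁻¹ * b₂ ∈ center G) : ⁅a₁, b₁⁆ = ⁅a₂, b₂⁆ :=
  calc ⁅a₁, b₁⁆ = ⁅a₁ * (a₁⁻¹ * a₂), b₁ * (b₁⁻¹ * b₂)⁆ := by
        rw [commutatorElement_mul_left_of_mem_center ha,
          commutatorElement_mul_right_of_mem_center hb]
    _ = ⁅a₂, b₂⁆ := by rw [mul_inv_cancel_left, mul_inv_cancel_left]

theorem commutatorElement_mem_commutator (a b : G) : ⁅a, b⁆ ∈ commutator G := by
  rw [commutator_def]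
  exact commutator_mem_commutator (mem_top a) (mem_top b)

variable (G) in
def commutatorMap : G ⧸ center G → G ⧸ center G → commutator G :=
  Quotient.lift₂ (s₁ := QuotientGroup.leftRel _) (s₂ := QuotientGroup.leftRel _)
    (fun a b => ⟨⁅a, b⁆, commutatorElement_mem_commutator a b⟩) fun _ _ _ _ ha hb =>
      Subtype.ext <| commutatorElement_congr_of_inv_mul_mem_center
        (QuotientGroup.leftRel_apply.mp ha) (QuotientGroup.leftRel_apply.mp hb)

theorem commutatorMap_mk (a b : G) :
    commutatorMap G a b = ⟨⁅a, b⁆, commutatorElement_mem_commutator a b⟩ :=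
  rfl

theorem commutatorMap_mk_eq_one_iff (a b : G) : commutatorMap G a b = 1 ↔ Commute a b :=
  Subtype.ext_iff.trans commutatorElement_eq_one_iff_commute

theorem QuotientGroup.card_subtype_mk_mk (s : Subgroup G) (P : G ⧸ s → G ⧸ s → Prop) :
    Nat.card {p : G × G // P p.1 p.2} =
      Nat.card {q : (G ⧸ s) × (G ⧸ s) // P q.1 q.2} * Nat.card s ^ 2 := by
  let e : G × G ≃ ((G ⧸ s) × (G ⧸ s)) × (s × s) :=
    (groupEquivQuotientProdSubgroup.prodCongr groupEquivQuotientProdSubgroup).trans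
      (Equiv.prodProdProdComm _ _ _ _)
  rw [sq, ← Nat.card_prod, ← Nat.card_prod]
  exact Nat.card_congr ((e.subtypeEquiv (p := fun p => P p.1 p.2) fun _ => Iff.rfl).trans
    Equiv.prodSubtypeFstEquivSubtypeProd)

theorem commProb_eq_card_commutatorMap_eq_one [Finite G] :
    commProb G = Nat.card {q : (G ⧸ center G) × (G ⧸ center G) // commutatorMap G q.1 q.2 = 1} /
      (Nat.card (G ⧸ center G) : ℚ) ^ 2 := by
  have hZ : (Nat.card (center G) : ℚ) ≠ 0 := Nat.cast_ne_zero.mpr Nat.card_pos.ne'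
  have hcomm : Nat.card {p : G × G // Commute p.1 p.2} =
      Nat.card {q : (G ⧸ center G) × (G ⧸ center G) // commutatorMap G q.1 q.2 = 1} *
        Nat.card (center G) ^ 2 := by
    simp_rw [← commutatorMap_mk_eq_one_iff]
    exact QuotientGroup.card_subtype_mk_mk (center G) fun x y => commutatorMap G x y = 1
  rw [commProb_def, hcomm, card_eq_card_quotient_mul_card_subgroup (center G)]
  push_cast
  rw [mul_pow, mul_div_mul_right _ _ (pow_ne_zero 2 hZ)]

theorem card_commutatorMap_eq_one_congr {H : Type*} [Group H]
    (α : (G ⧸ center G) ≃* (H ⧸ center H)) (β : commutator G ≃* commutator H)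
    (hαβ : ∀ x y, β (commutatorMap G x y) = commutatorMap H (α x) (α y)) :
    Nat.card {q : (G ⧸ center G) × (G ⧸ center G) // commutatorMap G q.1 q.2 = 1} =
      Nat.card {q : (H ⧸ center H) × (H ⧸ center H) // commutatorMap H q.1 q.2 = 1} :=
  Nat.card_congr <| (α.toEquiv.prodCongr α.toEquiv).subtypeEquiv fun q => by
    rw [← MulEquiv.map_eq_one_iff β, hαβ]
    rfl

end

theorem commProb_eq_of_isoclinic {G H : Type*} [Group G] [Group H] [Finite G] [Finite H]
    (hiso : ∃ (α : (G ⧸ Subgroup.center G) ≃* (H ⧸ Subgroup.center H))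
      (β : commutator G ≃* commutator H),
      ∀ (a b : G) (a' b' : H),
        α ((a : G ⧸ Subgroup.center G)) = (a' : H ⧸ Subgroup.center H) →
        α ((b : G ⧸ Subgroup.center G)) = (b' : H ⧸ Subgroup.center H) →
        (β ⟨⁅a, b⁆, by
          rw [commutator_def]
          exact Subgroup.commutator_mem_commutator (Subgroup.mem_top a)
            (Subgroup.mem_top b)⟩ : H) = ⁅a', b'⁆) :
    commProb G = commProb H := by
  obtain ⟨α, β, hαβ⟩ := hiso
  have hκ : ∀ x y, β (commutatorMap G x y) = commutatorMap H (α x) (α y) := by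
    intro x y
    obtain ⟨a, rfl⟩ := QuotientGroup.mk_surjective x
    obtain ⟨b, rfl⟩ := QuotientGroup.mk_surjective y
    obtain ⟨a', ha'⟩ := QuotientGroup.mk_surjective (α a)
    obtain ⟨b', hb'⟩ := QuotientGroup.mk_surjective (α b)
    rw [← ha', ← hb', commutatorMap_mk, commutatorMap_mk]
    exact Subtype.ext (hαβ a b a' b' ha'.symm hb'.symm)
  rw [commProb_eq_card_commutatorMap_eq_one, commProb_eq_card_commutatorMap_eq_one,
    card_commutatorMap_eq_one_congr α β hκ, Nat.card_congr α.toEquiv]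
end
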